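/- Let t and c be positive integers. If there exists a (t,4,c)-PSDS, then, with S = {c, c+1, …, 6t+c−1}, there exists a 3×12t integer matrix with entries from S ∪ (−S) such that the entries of each row comprise all elements of S ∪ (−S) exactly once and, for each pair of distinct rows, the componentwise differences comprise all elements of S ∪ (−S) exactly once. Furthermore, if c = 1, then there exists a PDM(3, 12t+1). -/

import Mathlib

/-- For odd `m = 2r+1`, the set `I_m = {-r, …, r}`. -/
noncomputable def Iset (m : ℕ) : Finset ℤ := Finset.Icc (-(((m : ℤ) - 1) / 2)) (((m : ℤ) - 1) / 2)

/-- `f` comprises all elements of `S` exactly once (entries from `S`,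
each element of `S` appearing exactly once). -/
def rowPerfect {ι : Type*} (S : Finset ℤ) (f : ι → ℤ) : Prop :=
  (∀ j, f j ∈ S) ∧ ∀ z ∈ S, ∃! j, f j = z

/-- `D` is a perfect difference matrix based on the set `S`: every row
comprises all elements of `S` exactly once, and the componentwise differences
of any two distinct rows comprise all elements of `S` exactly once. -/
def IsPDMOn {n : ℕ} {ι : Type*} (S : Finset ℤ) (D : Fin n → ι → ℤ) : Prop :=
  (∀ i, rowPerfect S (D i)) ∧
  ∀ s t : Fin n, s < t → rowPerfect S (fun j => D t j - D s j)

/-- There exists a `PDM(n,m)`. -/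
def PDMexists (n m : ℕ) : Prop := ∃ D : Fin n → Fin m → ℤ, IsPDMOn (Iset m) D

/-- There exists an `SIPDM(n,m,1)` (standard incomplete PDM with hole `{0}`). -/
def SIPDMexists (n m : ℕ) : Prop :=
  ∃ D : Fin n → Fin (m - 1) → ℤ, IsPDMOn (Iset m \ {0}) D

/-- Directed list of differences of a block, as a multiset. -/
def deltaB (B : Finset ℤ) : Multiset ℤ :=
  ((B ×ˢ B).filter (fun p => p.2 < p.1)).val.map (fun p => p.1 - p.2)

/-- Directed list of differences of a family of blocks. -/
def deltaFam {t : ℕ} (B : Fin t → Finset ℤ) : Multiset ℤ :=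
  (Finset.univ.val : Multiset (Fin t)).bind (fun i => deltaB (B i))

/-- A `(v,4,1)`-PDP with `t` blocks covering `H ⊆ [1,(v-1)/2]`: the directed
differences of the blocks cover each element of `H` exactly once and nothing else. -/
def IsPDP4 (v t : ℕ) (B : Fin t → Finset ℤ) (H : Finset ℤ) : Prop :=
  (∀ i, (B i).card = 4) ∧ H ⊆ Finset.Icc 1 (((v : ℤ) - 1) / 2) ∧ deltaFam B = H.val

/-- A `(t,4,c)`-PSDS: `t` blocks of size `4` whose directed differences cover
each element of `{c, …, c+6t-1}` exactly once and nothing else. -/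
def IsPSDS4 (t : ℕ) (c : ℤ) (B : Fin t → Finset ℤ) : Prop :=
  (∀ i, (B i).card = 4) ∧ deltaFam B = (Finset.Icc c (c + 6 * t - 1)).val

/-!
The alternating group `A₄` acts sharply 2-transitively on `Fin 4`: for `x ≠ y` the map
`σ ↦ (σ x, σ y)` is a bijection from `A₄` onto the ordered pairs of distinct points. Index the
columns by pairs `(i, σ)` of a block and an element of `A₄`, and put `a_{σ x}` in row `x`, where
`a₀ < a₁ < a₂ < a₃` lists block `i`. For `x ≠ y` the differences of rows `x` and `y` then run over
all differences `a - b` of distinct elements of all blocks, i.e. over `S ∪ (-S)` exactly once.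
Subtracting row `0` from rows `1, 2, 3` gives the `3 × 12t` matrix; for `c = 1` the set
`S ∪ (-S) ∪ {0}` is `I_{12t+1}`, and a zero column completes a `PDM(3, 12t+1)`.
-/

open Finset MulAction

lemma rowPerfect_iff_map_univ_val {ι : Type*} [Fintype ι] {S : Finset ℤ} {f : ι → ℤ} :
    rowPerfect S f ↔ univ.val.map f = S.val := by
  constructor
  · rintro ⟨hmem, huniq⟩
    have hinj : Function.Injective f := fun i j hij =>
      (huniq (f j) (hmem j)).unique hij rfl
    refine Multiset.Nodup.ext (univ.nodup.map hinj) S.nodup |>.mpr fun z => ?_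
    simp only [Multiset.mem_map, mem_val, mem_univ, true_and]
    exact ⟨fun ⟨j, hj⟩ => hj ▸ hmem j, fun hz => (huniq z hz).exists⟩
  · intro h
    have hmem_iff : ∀ z, z ∈ S ↔ ∃ j, f j = z := fun z => by
      rw [← mem_val, ← h, Multiset.mem_map]; simp
    have hinj : Function.Injective f := fun i j hij =>
      Multiset.inj_on_of_nodup_map (h ▸ S.nodup) i (mem_univ i) j (mem_univ j) hij
    exact ⟨fun j => (hmem_iff _).mpr ⟨j, rfl⟩, fun z hz =>
      ((hmem_iff z).mp hz).elim fun j hj => ⟨j, hj, fun k hk => hinj (hk.trans hj.symm)⟩⟩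

lemma rowPerfect.comp_equiv {ι κ : Type*} [Fintype ι] [Fintype κ] {S : Finset ℤ} {f : ι → ℤ}
    (hf : rowPerfect S f) (e : κ ≃ ι) : rowPerfect S (f ∘ e) := by
  rw [rowPerfect_iff_map_univ_val] at hf ⊢
  rwa [← Multiset.map_map, Multiset.map_univ_val_equiv]

lemma rowPerfect.cons_zero {m : ℕ} {S : Finset ℤ} {f : Fin m → ℤ} (hf : rowPerfect S f)
    (h0 : (0 : ℤ) ∉ S) : rowPerfect (insert 0 S) (Fin.cons 0 f : Fin (m + 1) → ℤ) := by
  rw [rowPerfect_iff_map_univ_val, Fin.univ_val_map] at hf ⊢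
  rw [insert_val_of_notMem h0, ← hf, List.ofFn_succ]
  simp

lemma IsPDMOn.reindex {n : ℕ} {ι κ : Type*} [Fintype ι] [Fintype κ] {S : Finset ℤ}
    {D : Fin n → ι → ℤ} (hD : IsPDMOn S D) (e : κ ≃ ι) : IsPDMOn S (fun r => D r ∘ e) :=
  ⟨fun r => (hD.1 r).comp_equiv e, fun s r hsr => (hD.2 s r hsr).comp_equiv e⟩

lemma IsPDMOn.cons_zero {n m : ℕ} {S : Finset ℤ} {D : Fin n → Fin m → ℤ} (hD : IsPDMOn S D)
    (h0 : (0 : ℤ) ∉ S) : IsPDMOn (insert 0 S) (fun r => (Fin.cons 0 (D r) : Fin (m + 1) → ℤ)) := by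
  refine ⟨fun r => (hD.1 r).cons_zero h0, fun s r hsr => ?_⟩
  have hsub : (fun j => (Fin.cons 0 (D r) : Fin (m + 1) → ℤ) j -
      (Fin.cons 0 (D s) : Fin (m + 1) → ℤ) j) =
      (Fin.cons 0 (fun j => D r j - D s j) : Fin (m + 1) → ℤ) := by
    funext j
    cases j using Fin.cases <;> simp
  rw [hsub]
  exact (hD.2 s r hsr).cons_zero h0

lemma isPDMOn_of_map_sub_eq {n : ℕ} {ι : Type*} [Fintype ι] {S : Finset ℤ}
    (F : Fin (n + 1) → ι → ℤ)
    (hF : ∀ x y, x ≠ y → univ.val.map (fun j => F x j - F y j) = S.val) :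
    IsPDMOn S (fun r j => F r.succ j - F 0 j) := by
  refine ⟨fun r => rowPerfect_iff_map_univ_val.mpr (hF _ _ r.succ_ne_zero), fun s r hsr => ?_⟩
  simp only [sub_sub_sub_cancel_right]
  exact rowPerfect_iff_map_univ_val.mpr (hF _ _ (Fin.succ_injective _ |>.ne hsr.ne'))

theorem Finset.offDiag_val_eq_filter_lt_add_map_swap {α : Type*} [LinearOrder α] (s : Finset α) :
    s.offDiag.val = ((s ×ˢ s).filter (fun p => p.2 < p.1)).val +
      ((s ×ˢ s).filter (fun p => p.2 < p.1)).val.map Prod.swap := by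
  set F := (s ×ˢ s).filter (fun p => p.2 < p.1)
  have hdisj : Disjoint F (F.map (Equiv.prodComm α α).toEmbedding) := by
    rw [disjoint_left]
    rintro ⟨a, b⟩ hF hswap
    simp only [F, mem_map_equiv, mem_filter, mem_product, Equiv.prodComm_symm,
      Equiv.prodComm_apply, Prod.swap_prod_mk] at hF hswap
    exact lt_asymm hF.2 hswap.2
  have hsplit : s.offDiag = F.disjUnion (F.map (Equiv.prodComm α α).toEmbedding) hdisj := by
    ext ⟨a, b⟩
    simp only [F, mem_offDiag, disjUnion_eq_union, mem_union, mem_map_equiv, mem_filter,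
      mem_product, Equiv.prodComm_symm, Equiv.prodComm_apply, Prod.swap_prod_mk, ne_iff_lt_or_gt]
    tauto
  rw [hsplit, disjUnion_val, map_val]
  rfl

lemma deltaB_add_map_neg (B : Finset ℤ) :
    deltaB B + (deltaB B).map Neg.neg = B.offDiag.val.map (fun p => p.1 - p.2) := by
  rw [offDiag_val_eq_filter_lt_add_map_swap, Multiset.map_add, Multiset.map_map, deltaB,
    Multiset.map_map]
  congr 2
  funext p
  simp

theorem Finset.offDiag_map {α β : Type*} (s : Finset α) (f : α ↪ β) :
    (s.map f).offDiag = s.offDiag.map (f.prodMap f) := by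
  ext ⟨a, b⟩
  simp only [mem_offDiag, mem_map, Function.Embedding.prodMap, Function.Embedding.coeFn_mk,
    Prod.exists, Prod.map, Prod.mk.injEq]
  constructor
  · rintro ⟨⟨x, hx, rfl⟩, ⟨y, hy, rfl⟩, hxy⟩
    exact ⟨x, y, ⟨hx, hy, fun h => hxy (h ▸ rfl)⟩, rfl, rfl⟩
  · rintro ⟨x, y, ⟨hx, hy, hxy⟩, rfl, rfl⟩
    exact ⟨⟨x, hx, rfl⟩, ⟨y, hy, rfl⟩, f.injective.ne hxy⟩

lemma map_smul_pair_univ_val_eq_offDiag {G α : Type*} [Group G] [MulAction G α] [Fintype G]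
    [Fintype α] [DecidableEq α] [IsMultiplyPretransitive G α 2]
    (hcard : Fintype.card G = (univ : Finset α).offDiag.card) {a b : α} (hab : a ≠ b) :
    univ.val.map (fun g : G => (g • a, g • b)) = (univ : Finset α).offDiag.val := by
  have himage : univ.image (fun g : G => (g • a, g • b)) = univ.offDiag := by
    ext ⟨c, d⟩
    simp only [mem_image, mem_univ, true_and, mem_offDiag, Prod.mk.injEq]
    constructor
    · rintro ⟨g, rfl, rfl⟩
      exact (MulAction.injective g).ne hab
    · intro hcd
      exact is_two_pretransitive_iff.mp inferInstance hab hcd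
  have hinj : Set.InjOn (fun g : G => (g • a, g • b)) (univ : Finset G) :=
    card_image_iff.mp (by rw [himage, ← hcard, card_univ])
  rw [← image_val_of_injOn hinj, himage]

instance : IsMultiplyPretransitive (alternatingGroup (Fin 4)) (Fin 4) 2 := by
  simpa using alternatingGroup.isMultiplyPretransitive (Fin 4)

lemma card_alternatingGroup_fin_four : Fintype.card (alternatingGroup (Fin 4)) = 12 := by
  rw [card_alternatingGroup]
  rfl

lemma map_alternatingGroup_sub_eq_deltaB {B : Finset ℤ} (hB : B.card = 4) {x y : Fin 4}
    (hxy : x ≠ y) :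
    univ.val.map (fun σ : alternatingGroup (Fin 4) =>
        B.orderEmbOfFin hB (σ • x) - B.orderEmbOfFin hB (σ • y)) =
      deltaB B + (deltaB B).map Neg.neg := by
  rw [deltaB_add_map_neg]
  conv_rhs => rw [← B.map_orderEmbOfFin_univ hB]
  have hcard : Fintype.card (alternatingGroup (Fin 4)) = (univ : Finset (Fin 4)).offDiag.card := by
    rw [card_alternatingGroup_fin_four, offDiag_card]
    rfl
  rw [offDiag_map, map_val, Multiset.map_map, ← map_smul_pair_univ_val_eq_offDiag hcard hxy,
    Multiset.map_map]
  rfl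

def psdsArray {t : ℕ} {B : Fin t → Finset ℤ} (hB : ∀ i, (B i).card = 4) (x : Fin 4)
    (j : Fin t × alternatingGroup (Fin 4)) : ℤ :=
  (B j.1).orderEmbOfFin (hB j.1) (j.2 • x)

lemma map_psdsArray_sub {t : ℕ} {B : Fin t → Finset ℤ} (hB : ∀ i, (B i).card = 4) {x y : Fin 4}
    (hxy : x ≠ y) :
    univ.val.map (fun j => psdsArray hB x j - psdsArray hB y j) =
      deltaFam B + (deltaFam B).map Neg.neg := by
  rw [← univ_product_univ, product_val]
  simp only [SProd.sprod, Multiset.product]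
  rw [Multiset.map_bind, deltaFam, Multiset.map_bind, ← Multiset.bind_add]
  refine Multiset.bind_congr fun i _ => ?_
  rw [Multiset.map_map]
  exact map_alternatingGroup_sub_eq_deltaB (hB i) hxy

lemma union_image_neg_val {S : Finset ℤ} (hS : ∀ z ∈ S, 0 < z) :
    (S ∪ S.image (fun z => -z)).val = S.val + S.val.map Neg.neg := by
  have hdisj : Disjoint S (S.image (fun z => -z)) := by
    simp only [disjoint_left, mem_image, not_exists, not_and]
    intro a ha b hb hba
    linarith [hS a ha, hS b hb]
  rw [← disjUnion_eq_union _ _ hdisj, disjUnion_val,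
    image_val_of_injOn (neg_injective.injOn)]

lemma zero_notMem_union_image_neg {S : Finset ℤ} (hS : ∀ z ∈ S, 0 < z) :
    (0 : ℤ) ∉ S ∪ S.image (fun z => -z) := by
  simp only [mem_union, mem_image, neg_eq_zero, exists_eq_right, not_or]
  exact ⟨fun h => (hS 0 h).false, fun h => (hS 0 h).false⟩

lemma Iset_two_mul_add_one (k : ℕ) :
    Iset (2 * k + 1) = insert 0 (Icc 1 (k : ℤ) ∪ (Icc 1 (k : ℤ)).image (fun z => -z)) := by
  ext z
  simp only [Iset, mem_Icc, mem_insert, mem_union, mem_image]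
  push_cast
  constructor
  · intro hz
    rcases lt_trichotomy z 0 with hneg | rfl | hpos
    · exact Or.inr (Or.inr ⟨-z, by omega, neg_neg z⟩)
    · exact Or.inl rfl
    · exact Or.inr (Or.inl (by omega))
  · rintro (rfl | hz | ⟨w, hw, rfl⟩) <;> omega

theorem stmt1_general (t : ℕ) (c : ℤ) (hc : 0 < c)
    (B : Fin t → Finset ℤ) (hB : IsPSDS4 t c B) :
    (∃ D : Fin 3 → Fin (12 * t) → ℤ,
      IsPDMOn (Finset.Icc c (c + 6 * t - 1) ∪
        (Finset.Icc c (c + 6 * t - 1)).image (fun z => -z)) D) ∧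
    (c = 1 → PDMexists 3 (12 * t + 1)) := by
  obtain ⟨hcard, hdelta⟩ := hB
  have hpos : ∀ z ∈ Icc c (c + 6 * t - 1), 0 < z := fun z hz => hc.trans_le (mem_Icc.mp hz).1
  have hPDM := isPDMOn_of_map_sub_eq (psdsArray hcard) fun x y hxy => by
    rw [map_psdsArray_sub hcard hxy, hdelta, union_image_neg_val hpos]
  have e : Fin (12 * t) ≃ Fin t × alternatingGroup (Fin 4) := Fintype.equivOfCardEq <| by
    rw [Fintype.card_prod, card_alternatingGroup_fin_four, Fintype.card_fin, Fintype.card_fin,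
      mul_comm]
  refine ⟨⟨_, hPDM.reindex e⟩, ?_⟩
  rintro rfl
  rw [PDMexists, show Iset (12 * t + 1) = Iset (2 * (6 * t) + 1) by ring_nf, Iset_two_mul_add_one,
    show ((6 * t : ℕ) : ℤ) = 1 + 6 * t - 1 by push_cast; ring]
  exact ⟨_, (hPDM.reindex e).cons_zero (zero_notMem_union_image_neg hpos)⟩

/-- Lemma 2.2.  If a `(t,4,c)`-PSDS exists, then, with
`S = {c, …, 6t+c-1}`, there is a `3 × 12t` matrix that is a perfect difference
matrix based on `S ∪ (-S)`; furthermore, if `c = 1`, then a `PDM(3, 12t+1)` exists. -/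
theorem stmt1 (t : ℕ) (c : ℤ) (ht : 0 < t) (hc : 0 < c)
    (B : Fin t → Finset ℤ) (hB : IsPSDS4 t c B) :
    (∃ D : Fin 3 → Fin (12 * t) → ℤ,
      IsPDMOn (Finset.Icc c (c + 6 * t - 1) ∪
        (Finset.Icc c (c + 6 * t - 1)).image (fun z => -z)) D) ∧
    (c = 1 → PDMexists 3 (12 * t + 1)) :=
  stmt1_general t c hc B hB
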